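/- arXiv:2410.06449 — 4 statements merged into one kernel-verified Lean document; each statement's English description precedes it below -/
import Mathlib

section
/- If 2 ≤ n < k, k ≥ 5, and 3 ≤ r ≤ ⌊(k-1)/2⌋ + 1, then ex(n, K_r) ≤ (⌊(k-1)/2⌋ - 1/k)(n-1). -/
open SimpleGraph Finset

-- edge count of the Turán graph
lemma turan_edge_bound (n q : ℕ) (hq : 1 ≤ q) :
    q * (2 * #(turanGraph n q).edgeFinset) + n * n ≤ q * (n * n) := by
  classical
  set c : ℕ → ℕ := fun a => #({v : Fin n | (v : ℕ) % q = a} : Finset (Fin n)) with hc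
  have hdeg : ∀ v : Fin n, (turanGraph n q).degree v + c ((v : ℕ) % q) = n := by
    intro v
    have : (turanGraph n q).degree v
        = #({w : Fin n | ¬ ((w : ℕ) % q = (v : ℕ) % q)} : Finset (Fin n)) := by
      rw [degree, neighborFinset]
      congr 1
      ext w
      rw [Set.mem_toFinset, mem_neighborSet]; simp [turanGraph, ne_comm, eq_comm]
    rw [this, hc]
    simpa using Finset.card_filter_add_card_filter_not
      (s := (Finset.univ : Finset (Fin n))) (p := fun w : Fin n => ¬((w : ℕ) % q = (v : ℕ) % q))
  have hsum : (∑ v : Fin n, (turanGraph n q).degree v) + ∑ v : Fin n, c ((v : ℕ) % q)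
      = n * n := by
    rw [← Finset.sum_add_distrib]
    simp [hdeg]
  have hfib : ∑ v : Fin n, c ((v : ℕ) % q) = ∑ a ∈ Finset.range q, c a * c a := by
    rw [← Finset.sum_fiberwise_of_maps_to (t := Finset.range q)
      (g := fun v : Fin n => (v : ℕ) % q) (fun v _ => Finset.mem_range.mpr (Nat.mod_lt _ hq))]
    refine Finset.sum_congr rfl fun a _ => ?_
    rw [Finset.sum_congr rfl (fun v hv => by rw [(Finset.mem_filter.mp hv).2]),
      Finset.sum_const, smul_eq_mul, hc]
  have hn : ∑ a ∈ Finset.range q, c a = n := by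
    have := Finset.card_eq_sum_card_fiberwise (s := (Finset.univ : Finset (Fin n)))
      (t := Finset.range q) (f := fun v : Fin n => (v : ℕ) % q)
      (fun v _ => Finset.mem_range.mpr (Nat.mod_lt _ hq))
    simpa [hc, Finset.card_univ] using this.symm
  have hCS : n * n ≤ q * ∑ a ∈ Finset.range q, c a * c a := by
    have h2 : ((∑ a ∈ Finset.range q, (c a : ℤ)) ^ 2)
        ≤ (#(Finset.range q) : ℤ) * ∑ a ∈ Finset.range q, (c a : ℤ) ^ 2 :=
      sq_sum_le_card_mul_sum_sq
    have := h2
    push_cast at this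
    rw [← Nat.cast_sum, hn] at this
    have : ((n : ℤ)) ^ 2 ≤ (q : ℤ) * ∑ a ∈ Finset.range q, (c a : ℤ) ^ 2 := by
      simpa using this
    have h3 : ((n * n : ℕ) : ℤ) ≤ ((q * ∑ a ∈ Finset.range q, c a * c a : ℕ) : ℤ) := by
      push_cast
      simp only [pow_two] at this
      linarith [this]
    exact_mod_cast h3
  have hdegsum : ∑ v : Fin n, (turanGraph n q).degree v = 2 * #(turanGraph n q).edgeFinset :=
    sum_degrees_eq_twice_card_edges _
  rw [hdegsum, hfib] at hsum
  calc q * (2 * #(turanGraph n q).edgeFinset) + n * n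
      ≤ q * (2 * #(turanGraph n q).edgeFinset) + q * ∑ a ∈ Finset.range q, c a * c a :=
        Nat.add_le_add_left hCS _
    _ = q * (2 * #(turanGraph n q).edgeFinset + ∑ a ∈ Finset.range q, c a * c a) :=
        (Nat.mul_add _ _ _).symm
    _ = q * (n * n) := by rw [hsum]

-- any (q+1)-cliquefree graph on Fin n has at most as many edges as the Turán graph
lemma edge_le_turan {n q : ℕ} (hq : 1 ≤ q) (G : SimpleGraph (Fin n)) [DecidableRel G.Adj]
    (hG : G.CliqueFree (q + 1)) :
    #G.edgeFinset ≤ #(turanGraph n q).edgeFinset := by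
  classical
  obtain ⟨H, hd, hmax⟩ := exists_isTuranMaximal (V := Fin n) (r := q) hq
  obtain ⟨f⟩ := hmax.nonempty_iso_turanGraph
  have h1 : #G.edgeFinset ≤ #H.edgeFinset := hmax.2 hG
  have h2 : #H.edgeFinset = #(turanGraph (Fintype.card (Fin n)) q).edgeFinset :=
    f.card_edgeFinset_eq
  rwa [h2, Fintype.card_fin] at h1

/-- `exK n r` is the Turán number ex(n, K_r): the maximum number of edges of an
`n`-vertex graph containing no copy of `K_r`. -/
noncomputable def exK (n r : ℕ) : ℕ :=
  sSup {m | ∃ G : SimpleGraph (Fin n), G.CliqueFree r ∧ G.edgeSet.ncard = m}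

lemma exK_mem (n r : ℕ) (hr : 2 ≤ r) :
    ∃ G : SimpleGraph (Fin n), G.CliqueFree r ∧ G.edgeSet.ncard = exK n r := by
  classical
  have hne : {m | ∃ G : SimpleGraph (Fin n), G.CliqueFree r ∧ G.edgeSet.ncard = m}.Nonempty := by
    refine ⟨(⊥ : SimpleGraph (Fin n)).edgeSet.ncard, ⊥, ?_, rfl⟩
    exact cliqueFree_bot hr
  have hbdd : BddAbove {m | ∃ G : SimpleGraph (Fin n), G.CliqueFree r ∧ G.edgeSet.ncard = m} := by
    refine ⟨(n.choose 2), fun m hm => ?_⟩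
    obtain ⟨G, -, rfl⟩ := hm
    have : G.edgeSet.ncard = #G.edgeFinset := by
      rw [Set.ncard_eq_toFinset_card']; congr 1
    rw [this]
    have h2 := G.card_edgeFinset_le_card_choose_two
    rwa [Fintype.card_fin] at h2
  exact Nat.sSup_mem hne hbdd

set_option maxHeartbeats 1000000 in
theorem stmt_7 (n k r : ℕ) (hn : 2 ≤ n) (hnk : n < k) (hk : 5 ≤ k)
    (hr3 : 3 ≤ r) (hr : r ≤ (k - 1) / 2 + 1) :
    (exK n r : ℝ) ≤ (((k - 1) / 2 : ℕ) - 1 / (k : ℝ)) * ((n : ℝ) - 1) := by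
  classical
  set Q : ℕ := (k - 1) / 2 with hQ
  obtain ⟨G, hGf, hGe⟩ := exK_mem n r (by omega)
  -- G is also CliqueFree (Q+1) since r ≤ Q+1
  have hGf' : G.CliqueFree (Q + 1) := hGf.mono (by omega)
  have hedge : G.edgeSet.ncard = #G.edgeFinset := by
    rw [Set.ncard_eq_toFinset_card']; congr 1
  have hQ2 : 2 ≤ Q := by
    have : 2 ≤ r - 1 := by omega
    omega
  have hbound : #G.edgeFinset ≤ #(turanGraph n Q).edgeFinset :=
    edge_le_turan (by omega) G hGf'
  have hturan := turan_edge_bound n Q (by omega)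
  -- now all real arithmetic
  have hkey : (Q : ℕ) * (2 * (exK n r)) + n * n ≤ Q * (n * n) := by
    calc Q * (2 * exK n r) + n * n ≤ Q * (2 * #(turanGraph n Q).edgeFinset) + n * n := by
          have : exK n r ≤ #(turanGraph n Q).edgeFinset := by
            rw [← hGe, hedge]; exact hbound
          exact Nat.add_le_add_right (Nat.mul_le_mul_left _ (Nat.mul_le_mul_left _ this)) _
      _ ≤ Q * (n * n) := hturan
  -- cast to ℝ
  have hkeyR : (Q : ℝ) * (2 * (exK n r)) + n * n ≤ Q * (n * n) := by exact_mod_cast hkey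
  have hnk' : (n : ℝ) ≤ (k : ℝ) - 1 := by
    have h' := (Nat.cast_le (α := ℝ)).mpr (show n + 1 ≤ k from hnk)
    push_cast at h'
    linarith
  have hkQ1 : (k : ℝ) ≤ 2 * Q + 2 := by
    have : k ≤ 2 * Q + 2 := by omega
    exact_mod_cast this
  have hkQ2 : 2 * (Q : ℝ) + 1 ≤ k := by
    have : 2 * Q + 1 ≤ k := by omega
    exact_mod_cast this
  have hnR : (2 : ℝ) ≤ n := by exact_mod_cast hn
  have hkR : (5 : ℝ) ≤ k := by exact_mod_cast hk
  have hQR : (2 : ℝ) ≤ Q := by exact_mod_cast hQ2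
  have hkpos : (0 : ℝ) < k := by linarith
  have hQpos : (0 : ℝ) < Q := by linarith
  have hEpos : (0 : ℝ) ≤ (exK n r : ℝ) := Nat.cast_nonneg _
  have hrw : (Q : ℝ) - 1 / k = ((k : ℝ) * Q - 1) / k := by field_simp
  rw [hrw, div_mul_eq_mul_div, le_div_iff₀ hkpos]
  have hn2Q : (n : ℝ) ≤ 2 * Q + 1 := by linarith
  nlinarith [hkeyR, hEpos, mul_pos hkpos hQpos,
    mul_nonneg (sub_nonneg.mpr hkQ2) (sub_nonneg.mpr hkQ1),
    mul_nonneg (mul_nonneg (sub_nonneg.mpr hn2Q) (by linarith : (0:ℝ) ≤ (n:ℝ) - 2)) hkpos.le,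
    mul_nonneg (mul_nonneg (sub_nonneg.mpr hn2Q) (by linarith : (0:ℝ) ≤ (n:ℝ) - 2)) hQpos.le,
    mul_nonneg (sub_nonneg.mpr hnk') (sub_nonneg.mpr hkQ2),
    mul_nonneg (mul_nonneg (sub_nonneg.mpr hnk') (by linarith : (0:ℝ) ≤ (n:ℝ) - 2)) hQpos.le,
    sq_nonneg ((n:ℝ) - 2*Q), sq_nonneg ((n:ℝ) - 2*Q - 1)]
end

section
/- If 5 ≤ k ≤ n and 3 ≤ r ≤ ⌊(k-1)/2⌋ + 1, then ex(k-1, K_r) + (⌊(k-1)/2⌋ - 1/2)(n - k + 1) ≤ (⌊(k-1)/2⌋ - 1/k)(n - 1). -/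
open SimpleGraph

/-- A `K_s`-free graph on `m` vertices misses at least `m - s + 1` edges. -/
lemma edges_add_le_of_cliqueFree (m s : ℕ) (_hs : 1 ≤ s) (hsm : s ≤ m)
    (G : SimpleGraph (Fin m)) [DecidableRel G.Adj] (h : G.CliqueFree s) :
    G.edgeFinset.card + (m - s + 1) ≤ m.choose 2 := by
  classical
  -- number of complement edges
  set e := Gᶜ.edgeFinset.card with he
  have hsum : G.edgeFinset.card + e ≤ m.choose 2 := by
    have hdisj : Disjoint G.edgeFinset Gᶜ.edgeFinset := by
      rw [Finset.disjoint_left]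
      intro a ha hb
      rw [mem_edgeFinset] at ha hb
      induction a with
      | h x y =>
        exact hb.2 ha
    calc G.edgeFinset.card + e = (G.edgeFinset ∪ Gᶜ.edgeFinset).card := by
          rw [Finset.card_union_of_disjoint hdisj]
      _ ≤ (⊤ : SimpleGraph (Fin m)).edgeFinset.card := by
          apply Finset.card_le_card
          apply Finset.union_subset <;>
            exact edgeFinset_subset_edgeFinset.2 le_top
      _ = (Fintype.card (Fin m)).choose 2 := card_edgeFinset_top_eq_card_choose_two
      _ = m.choose 2 := by rw [Fintype.card_fin]
  -- complement has at least m - s + 1 edges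
  have hce : m - s + 1 ≤ e := by
    by_contra hcon
    push_neg at hcon
    have hem : e + s ≤ m := by omega
    -- choose one endpoint from each complement edge
    set B : Finset (Fin m) := Gᶜ.edgeFinset.image (fun a => a.out.1) with hB
    have hBcard : B.card ≤ e := Finset.card_image_le
    have hC : s ≤ (Finset.univ \ B).card := by
      have h1 : (Finset.univ : Finset (Fin m)).card = m := by simp
      have h2 : m - B.card ≤ (Finset.univ \ B).card := by
        have := Finset.le_card_sdiff B (Finset.univ : Finset (Fin m))
        simpa [h1] using this
      omega
    obtain ⟨D, hDsub, hDcard⟩ := Finset.exists_subset_card_eq hC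
    have hclique : G.IsNClique s D := by
      constructor
      · intro u hu v hv huv
        by_contra hadj
        have hcadj : Gᶜ.Adj u v := ⟨huv, hadj⟩
        have hmem : s(u, v) ∈ Gᶜ.edgeFinset := by
          rw [mem_edgeFinset]; exact hcadj
        have hout : (s(u, v) : Sym2 (Fin m)).out.1 ∈ B :=
          Finset.mem_image_of_mem _ hmem
        have hin : (s(u, v) : Sym2 (Fin m)).out.1 ∈ s(u, v) := Sym2.out_fst_mem _
        rw [Sym2.mem_iff] at hin
        rcases hin with h' | h'
        · have := hDsub hu
          rw [Finset.mem_sdiff] at this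
          exact this.2 (h' ▸ hout)
        · have := hDsub hv
          rw [Finset.mem_sdiff] at this
          exact this.2 (h' ▸ hout)
      · exact hDcard
    exact h D hclique
  omega

theorem stmt_8 (n k r : ℕ) (hk : 5 ≤ k) (hkn : k ≤ n)
    (hr3 : 3 ≤ r) (hr : r ≤ (k - 1) / 2 + 1) :
    (exK (k - 1) r : ℝ) + (((k - 1) / 2 : ℕ) - 1 / 2) * ((n : ℝ) - (k : ℝ) + 1)
      ≤ (((k - 1) / 2 : ℕ) - 1 / (k : ℝ)) * ((n : ℝ) - 1) := by
  classical
  set m := k - 1 with hm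
  set t := (k - 1) / 2 with ht
  have hm4 : 4 ≤ m := by omega
  have ht2 : 2 ≤ t := by omega
  clear_value t m
  -- bound on exK
  have hq : m.choose 2 + t + 1 ≤ t * (m - 1) + m := by
    obtain ⟨t', rfl⟩ : ∃ t', t = t' + 2 := ⟨t - 2, by omega⟩
    rcases (by omega : m = 2 * (t' + 2) ∨ m = 2 * (t' + 2) + 1) with hpar | hpar <;> subst hpar
    · have h1 : (2 * (t' + 2)).choose 2 = (t' + 2) * (2 * t' + 3) := by
        rw [Nat.choose_two_right]
        have h0 : 2 * (t' + 2) - 1 = 2 * t' + 3 := by omega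
        rw [h0]
        have h0' : 2 * (t' + 2) * (2 * t' + 3) = 2 * ((t' + 2) * (2 * t' + 3)) := by ring
        rw [h0', Nat.mul_div_cancel_left _ (by norm_num)]
      have h2 : (t' + 2) * (2 * (t' + 2) - 1) = (t' + 2) * (2 * t' + 3) := by
        have h0 : 2 * (t' + 2) - 1 = 2 * t' + 3 := by omega
        rw [h0]
      rw [h1, h2]
      omega
    · have h1 : (2 * (t' + 2) + 1).choose 2 = (2 * t' + 5) * (t' + 2) := by
        rw [Nat.choose_two_right]
        have h0 : 2 * (t' + 2) + 1 - 1 = 2 * t' + 4 := by omega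
        rw [h0]
        have h0' : (2 * (t' + 2) + 1) * (2 * t' + 4) = 2 * ((2 * t' + 5) * (t' + 2)) := by ring
        rw [h0', Nat.mul_div_cancel_left _ (by norm_num)]
      have h2 : (t' + 2) * (2 * (t' + 2) + 1 - 1) = (t' + 2) * (2 * t' + 4) := by
        have h0 : 2 * (t' + 2) + 1 - 1 = 2 * t' + 4 := by omega
        rw [h0]
      have h3 : (2 * t' + 5) * (t' + 2) = (t' + 2) * (2 * t' + 4) + t' + 2 := by ring
      rw [h1, h2]
      omega
  have hex : exK m r ≤ t * (m - 1) - 1 := by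
    apply csSup_le'
    rintro x ⟨G, hGfree, hGcard⟩
    have : DecidableRel G.Adj := Classical.decRel _
    have hfree : G.CliqueFree (t + 1) := hGfree.mono hr
    have hb := edges_add_le_of_cliqueFree m (t + 1) (by omega) (by omega) G hfree
    have hx : x = G.edgeFinset.card := by
      rw [← hGcard]
      simp [Set.ncard_eq_toFinset_card', edgeFinset]
    omega
  have hexR : (exK m r : ℝ) ≤ (t : ℝ) * ((m : ℝ) - 1) - 1 := by
    have h1 : 1 ≤ t * (m - 1) := by
      have : 2 * 3 ≤ t * (m - 1) := Nat.mul_le_mul ht2 (by omega)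
      omega
    calc (exK m r : ℝ) ≤ ((t * (m - 1) - 1 : ℕ) : ℝ) := by exact_mod_cast hex
      _ = (t : ℝ) * ((m : ℝ) - 1) - 1 := by
          push_cast [Nat.cast_sub h1, Nat.cast_sub (by omega : 1 ≤ m)]
          ring
  have hmR : (m : ℝ) = (k : ℝ) - 1 := by
    rw [hm]; push_cast [Nat.cast_sub (by omega : 1 ≤ k)]; ring
  have hkR : (5 : ℝ) ≤ (k : ℝ) := by exact_mod_cast hk
  have hnR : (k : ℝ) ≤ (n : ℝ) := by exact_mod_cast hkn
  have hk0 : (0 : ℝ) < (k : ℝ) := by linarith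
  rw [hmR] at hexR
  have key : (t : ℝ) * ((k : ℝ) - 1 - 1) - 1 + ((t : ℝ) - 1 / 2) * ((n : ℝ) - (k : ℝ) + 1)
      ≤ ((t : ℝ) - 1 / (k : ℝ)) * ((n : ℝ) - 1) := by
    have h2 : ((n : ℝ) - 1) / (k : ℝ) ≤ 1 + ((n : ℝ) - (k : ℝ) + 1) / 2 := by
      rw [div_le_iff₀ hk0]
      nlinarith
    have h3 : ((t : ℝ) - 1 / (k : ℝ)) * ((n : ℝ) - 1)
        = (t : ℝ) * ((n : ℝ) - 1) - ((n : ℝ) - 1) / (k : ℝ) := by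
      field_simp
    nlinarith [h2, h3]
  linarith [hexR, key]
end

section
/- If n ≥ k ≥ 7, ⌊(k-1)/2⌋ + 2 ≤ r < k, and g_r(n,2,k) > g_r(n, ⌊(k-1)/2⌋, k), then n ≤ 5k/4 - 1. -/
open SimpleGraph

noncomputable def gr (n a k r : ℕ) : ℝ :=
  (a : ℝ) * ((n : ℝ) - (k : ℝ) + (a : ℝ)) + (exK (k - a) r : ℝ)


lemma ncard_eq_card_edgeFinset {V : Type*} [Fintype V] (G : SimpleGraph V)
    [Fintype G.edgeSet] : G.edgeSet.ncard = G.edgeFinset.card :=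
  Set.ncard_eq_toFinset_card' _

lemma exK_mem_le (m r x : ℕ)
    (hx : x ∈ {x | ∃ G : SimpleGraph (Fin m), G.CliqueFree r ∧ G.edgeSet.ncard = x}) :
    x ≤ m.choose 2 := by
  classical
  obtain ⟨G, -, rfl⟩ := hx
  rw [ncard_eq_card_edgeFinset]
  simpa using G.card_edgeFinset_le_card_choose_two

lemma exK_le (m r : ℕ) : exK m r ≤ m.choose 2 := by
  unfold exK
  rcases Set.eq_empty_or_nonempty
      {x | ∃ G : SimpleGraph (Fin m), G.CliqueFree r ∧ G.edgeSet.ncard = x} with h | h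
  · rw [h, csSup_empty]; exact Nat.zero_le _
  · exact csSup_le h (exK_mem_le m r)

lemma two_mul_choose_two (m : ℕ) : 2 * m.choose 2 = m * (m - 1) := by
  rcases m with _ | m'
  · simp
  · rw [Nat.choose_two_right, Nat.succ_sub_one]
    exact Nat.mul_div_cancel' ((even_iff_two_dvd).mp (by
      simpa [Nat.mul_comm] using Nat.even_mul_succ_self m'))

lemma le_exK (b r : ℕ) (hb : 2 ≤ b) (hbr : b ≤ r) :
    b.choose 2 ≤ exK b r + 1 := by
  classical
  set G : SimpleGraph (Fin b) := turanGraph b (b - 1) with hG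
  have hcf : G.CliqueFree r := by
    have h1 : (0 : ℕ) < b - 1 := by omega
    have := turanGraph_cliqueFree (n := b) h1
    rw [show b - 1 + 1 = b by omega] at this
    exact this.mono hbr
  have hmod : ∀ u : ℕ, u < b → u % (b - 1) = if u = b - 1 then 0 else u := by
    intro u hu
    split_ifs with h
    · simp [h]
    · exact Nat.mod_eq_of_lt (by omega)
  -- complement inside ⊤ has exactly one edge
  have hcompl : ((⊤ : SimpleGraph (Fin b)) \ G).edgeSet
      = {s((⟨0, by omega⟩ : Fin b), (⟨b - 1, by omega⟩ : Fin b))} := by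
    ext e
    induction e with
    | _ x y =>
      simp only [mem_edgeSet, sdiff_adj, top_adj, hG, turanGraph, not_not,
        Set.mem_singleton_iff, Sym2.eq_iff, Fin.ext_iff, Fin.val_mk, ne_eq]
      have hx := hmod x.1 x.2
      have hy := hmod y.1 y.2
      have hx2 := x.2
      have hy2 := y.2
      rw [hx, hy]
      split_ifs <;> omega
  have hccard : ((⊤ : SimpleGraph (Fin b)) \ G).edgeSet.ncard = 1 := by
    rw [hcompl]; exact Set.ncard_singleton _
  have hsd : ((⊤ : SimpleGraph (Fin b)) \ G).edgeFinset
      = (⊤ : SimpleGraph (Fin b)).edgeFinset \ G.edgeFinset := edgeFinset_sdiff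
  have hsub : G.edgeFinset ⊆ (⊤ : SimpleGraph (Fin b)).edgeFinset :=
    edgeFinset_subset_edgeFinset.2 le_top
  have htop : (⊤ : SimpleGraph (Fin b)).edgeFinset.card = b.choose 2 := by
    simpa using (card_edgeFinset_top_eq_card_choose_two (V := Fin b))
  have h1 : ((⊤ : SimpleGraph (Fin b)) \ G).edgeFinset.card = 1 := by
    rw [← ncard_eq_card_edgeFinset]; exact hccard
  have hGc : G.edgeFinset.card + 1 = b.choose 2 := by
    have := Finset.card_sdiff_of_subset hsub
    rw [← hsd, h1, htop] at this
    have hle := Finset.card_le_card hsub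
    rw [htop] at hle
    omega
  have hmem : G.edgeSet.ncard ∈
      {x | ∃ H : SimpleGraph (Fin b), H.CliqueFree r ∧ H.edgeSet.ncard = x} :=
    ⟨G, hcf, rfl⟩
  have hbdd : BddAbove {x | ∃ H : SimpleGraph (Fin b), H.CliqueFree r ∧ H.edgeSet.ncard = x} :=
    ⟨b.choose 2, fun x hx => exK_mem_le b r x hx⟩
  have := le_csSup hbdd hmem
  rw [ncard_eq_card_edgeFinset] at this
  unfold exK
  omega

theorem stmt_10 (n k r : ℕ) (hk : 7 ≤ k) (hkn : k ≤ n)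
    (hr1 : (k - 1) / 2 + 2 ≤ r) (hr2 : r < k)
    (hg : gr n 2 k r > gr n ((k - 1) / 2) k r) :
    (n : ℝ) ≤ 5 * (k : ℝ) / 4 - 1 := by
  set a : ℕ := (k - 1) / 2 with ha
  have hak : 2 * a + 1 ≤ k ∧ k ≤ 2 * a + 2 := ⟨by omega, by omega⟩
  -- convert hg to a natural-number inequality
  have hnk : (n : ℝ) - (k : ℝ) = ((n - k : ℕ) : ℝ) := by
    rw [Nat.cast_sub hkn]
  rw [gr, gr, hnk] at hg
  have key : a * ((n - k) + a) + exK (k - a) r < 2 * ((n - k) + 2) + exK (k - 2) r := by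
    exact_mod_cast hg
  obtain ⟨d, hd⟩ : ∃ d, a = d + 3 := ⟨a - 3, by omega⟩
  obtain ⟨e, he⟩ : ∃ e, k = 2 * a + 1 + e ∧ e ≤ 1 := ⟨k - (2 * a + 1), by omega⟩
  have h1 : k - 2 = 2 * d + 5 + e := by omega
  have h2 : k - a = d + 4 + e := by omega
  rw [h1, h2, hd] at key
  -- upper bound for exK (k-2) r
  have hC1 : 2 * exK (2 * d + 5 + e) r ≤ (2 * d + 5 + e) * (2 * d + 4 + e) := by
    have hu := exK_le (2 * d + 5 + e) r
    have hv := two_mul_choose_two (2 * d + 5 + e)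
    rw [show 2 * d + 5 + e - 1 = 2 * d + 4 + e from by omega] at hv
    calc 2 * exK (2 * d + 5 + e) r ≤ 2 * (2 * d + 5 + e).choose 2 := by omega
      _ = _ := hv
  -- lower bound for exK (k-a) r
  have hC2 : (d + 4 + e) * (d + 3 + e) ≤ 2 * exK (d + 4 + e) r + 2 := by
    have hu := le_exK (d + 4 + e) r (by omega) (by omega)
    have hv := two_mul_choose_two (d + 4 + e)
    rw [show d + 4 + e - 1 = d + 3 + e from by omega] at hv
    calc (d + 4 + e) * (d + 3 + e) = 2 * (d + 4 + e).choose 2 := hv.symm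
      _ ≤ 2 * exK (d + 4 + e) r + 2 := by omega
  -- final bound in ℤ
  have goal4 : 4 * (n - k) ≤ 2 * d + 3 + e := by
    by_contra hcon
    push_neg at hcon
    have key' : ((d : ℤ) + 3) * ((n - k : ℕ) + (d + 3)) + exK (d + 4 + e) r + 1
        ≤ 2 * ((n - k : ℕ) + 2) + exK (2 * d + 5 + e) r := by exact_mod_cast key
    have hC1' : 2 * (exK (2 * d + 5 + e) r : ℤ) ≤ (2 * d + 5 + e) * (2 * d + 4 + e) := by
      exact_mod_cast hC1
    have hC2' : ((d : ℤ) + 4 + e) * ((d : ℤ) + 3 + e) ≤ 2 * exK (d + 4 + e) r + 2 := by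
      exact_mod_cast hC2
    have hcon2 : 2 * d + 4 + e ≤ 4 * (n - k) := by omega
    have hcon' : 2 * (d : ℤ) + 4 + e ≤ 4 * ((n - k : ℕ) : ℤ) := by exact_mod_cast hcon2
    have he1 : (e : ℤ) ≤ 1 := by exact_mod_cast he.2
    have hd0 : (0 : ℤ) ≤ (d : ℤ) := Int.natCast_nonneg d
    have he0 : (0 : ℤ) ≤ (e : ℤ) := Int.natCast_nonneg e
    nlinarith [mul_nonneg (by linarith : (0:ℤ) ≤ (d:ℤ) + 1)
        (by linarith : (0:ℤ) ≤ 4 * ((n - k : ℕ) : ℤ) - (2 * d + 4 + e)),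
      mul_nonneg (by linarith : (0:ℤ) ≤ 1 - (e:ℤ)) (by linarith : (0:ℤ) ≤ (d:ℤ) + 1)]
  -- conclude
  have h4 : 4 * n + 4 ≤ 5 * k := by omega
  have : ((4 * n + 4 : ℕ) : ℝ) ≤ ((5 * k : ℕ) : ℝ) := Nat.cast_le.mpr h4
  push_cast at this
  linarith
end

section
/- If 6 ≤ k ≤ n ≤ 5k/4 - 1, r ≥ ⌊(k-1)/2⌋ + 2, and n - 1 = (k-2) + q with q ≤ k-3, then g_r(n,2,k) ≤ f(n,k,r), i.e., 2(n-k+2) + ex(k-2, K_r) ≤ ex(k-1, K_r) + ex(q+1, K_r). -/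
open SimpleGraph

lemma exK_bddAbove (n r : ℕ) :
    BddAbove {m | ∃ G : SimpleGraph (Fin n), G.CliqueFree r ∧ G.edgeSet.ncard = m} := by
  refine ⟨(Set.univ : Set (Sym2 (Fin n))).ncard, ?_⟩
  rintro m ⟨G, _, rfl⟩
  exact Set.ncard_le_ncard (Set.subset_univ _) Set.finite_univ

lemma exK_ge {n r : ℕ} (G : SimpleGraph (Fin n)) (hG : G.CliqueFree r) :
    G.edgeSet.ncard ≤ exK n r :=
  le_csSup (exK_bddAbove n r) ⟨G, hG, rfl⟩

lemma exK_le_s11 {n r b : ℕ} (hr : 2 ≤ r)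
    (h : ∀ G : SimpleGraph (Fin n), G.CliqueFree r → G.edgeSet.ncard ≤ b) :
    exK n r ≤ b :=
  csSup_le ⟨(⊥ : SimpleGraph (Fin n)).edgeSet.ncard, ⊥, cliqueFree_bot hr, rfl⟩
    (by rintro m ⟨G, hG, rfl⟩; exact h G hG)

lemma edge_ncard_add_compl {m : ℕ} (G : SimpleGraph (Fin m)) :
    G.edgeSet.ncard + Gᶜ.edgeSet.ncard = m.choose 2 := by
  classical
  have hdisj : Disjoint G.edgeSet Gᶜ.edgeSet := by
    rw [Set.disjoint_left]
    intro e he he'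
    induction e with
    | _ u v =>
      rw [mem_edgeSet] at he he'
      exact ((G.compl_adj u v).1 he').2 he
  have hsum : G.edgeSet ∪ Gᶜ.edgeSet = (⊤ : SimpleGraph (Fin m)).edgeSet := by
    rw [← edgeSet_sup, sup_compl_eq_top]
  have htop : (⊤ : SimpleGraph (Fin m)).edgeSet.ncard = m.choose 2 := by
    rw [Set.ncard_eq_toFinset_card']
    have := SimpleGraph.card_edgeFinset_top_eq_card_choose_two (V := Fin m)
    rw [Fintype.card_fin] at this
    rw [← this]
    exact congrArg Finset.card (Set.toFinset_congr rfl)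
  rw [← Set.ncard_union_eq hdisj (Set.toFinite _) (Set.toFinite _), hsum, htop]

/-- Turán-type upper bound in the regime of at most 2 vertices per part. -/
lemma turan_upper {m r : ℕ} (hr : 1 ≤ r) (G : SimpleGraph (Fin m)) (hG : G.CliqueFree r) :
    G.edgeSet.ncard + (m - (r - 1)) ≤ m.choose 2 := by
  classical
  have hsum := edge_ncard_add_compl G
  have hcompl : m - (r - 1) ≤ Gᶜ.edgeSet.ncard := by
    by_contra hlt
    push_neg at hlt
    have hcard : Gᶜ.edgeSet.ncard + r ≤ m := by omega
    set P : Finset (Fin m) := Gᶜ.edgeFinset.image (fun e => e.out.1) with hP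
    have hPcard : P.card ≤ Gᶜ.edgeSet.ncard := by
      calc P.card ≤ Gᶜ.edgeFinset.card := Finset.card_image_le
        _ = Gᶜ.edgeSet.ncard := (Set.ncard_eq_toFinset_card' _).symm
    set S : Finset (Fin m) := Finset.univ \ P with hS
    have hScard : r ≤ S.card := by
      rw [hS, Finset.card_sdiff_of_subset (Finset.subset_univ _), Finset.card_univ, Fintype.card_fin]
      omega
    obtain ⟨t, hts, htcard⟩ := Finset.exists_subset_card_eq hScard
    refine hG t ⟨?_, htcard⟩
    intro u hu v hv huv
    by_contra hadj
    have hadj' : Gᶜ.Adj u v := (G.compl_adj u v).2 ⟨huv, hadj⟩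
    have hmem : s(u, v) ∈ Gᶜ.edgeFinset := by
      rw [mem_edgeFinset, mem_edgeSet]; exact hadj'
    have hout : (s(u, v) : Sym2 (Fin m)).out.1 ∈ P :=
      Finset.mem_image.2 ⟨_, hmem, rfl⟩
    have hmemuv : (s(u, v) : Sym2 (Fin m)).out.1 = u ∨ (s(u, v) : Sym2 (Fin m)).out.1 = v :=
      Sym2.mem_iff.1 (Sym2.out_fst_mem _)
    have hu' : u ∈ S := hts hu
    have hv' : v ∈ S := hts hv
    rw [hS, Finset.mem_sdiff] at hu' hv'
    rcases hmemuv with h | h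
    · exact hu'.2 (h ▸ hout)
    · exact hv'.2 (h ▸ hout)
  omega

/-- Complete graph minus a matching of `c` edges. -/
def mg (m c : ℕ) : SimpleGraph (Fin m) where
  Adj u v := u ≠ v ∧ ¬(u.val / 2 = v.val / 2 ∧ u.val < 2 * c)
  symm := by
    constructor
    rintro u v ⟨h1, h2⟩
    refine ⟨h1.symm, fun h => h2 ⟨h.1.symm, ?_⟩⟩
    have := h.1
    omega
  loopless := ⟨fun u h => h.1 rfl⟩

lemma mg_cliqueFree (m c r : ℕ) (h2c : 2 * c ≤ m) (hmc : m - c < r) :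
    (mg m c).CliqueFree r := by
  intro s hs
  have hinj : Set.InjOn (fun v : Fin m => if v.val < 2 * c then v.val / 2 else v.val - c) s := by
    intro u hu v hv hf
    by_contra hne
    have hadj := hs.1 hu hv hne
    have hval : u.val ≠ v.val := fun h => hne (Fin.ext h)
    have h2 := (show u ≠ v ∧ _ from hadj).2
    simp only at hf
    split_ifs at hf <;> omega
  have himg : s.image (fun v : Fin m => if v.val < 2 * c then v.val / 2 else v.val - c)
      ⊆ Finset.range (m - c) := by
    intro x hx
    rw [Finset.mem_image] at hx
    obtain ⟨v, _, rfl⟩ := hx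
    rw [Finset.mem_range]
    have := v.isLt
    split_ifs <;> omega
  have hcard : s.card ≤ m - c := by
    calc s.card = (s.image _).card := (Finset.card_image_of_injOn hinj).symm
      _ ≤ (Finset.range (m - c)).card := Finset.card_le_card himg
      _ = m - c := Finset.card_range _
  rw [hs.2] at hcard
  omega

lemma mg_compl_ncard (m c : ℕ) (h2c : 2 * c ≤ m) :
    (mg m c)ᶜ.edgeSet.ncard = c := by
  classical
  set f : Fin c → Sym2 (Fin m) := fun i =>
    s((⟨2 * i.val, by have := i.isLt; omega⟩ : Fin m),
      (⟨2 * i.val + 1, by have := i.isLt; omega⟩ : Fin m)) with hf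
  have hrange : (mg m c)ᶜ.edgeSet = Set.range f := by
    ext e
    induction e with
    | _ u v =>
      simp only [mem_edgeSet, Set.mem_range]
      constructor
      · intro he
        obtain ⟨hne, hnadj⟩ := ((mg m c).compl_adj u v).1 he
        have hval : u.val ≠ v.val := fun h => hne (Fin.ext h)
        have hP : u.val / 2 = v.val / 2 ∧ u.val < 2 * c := by
          by_contra h
          exact hnadj (show u ≠ v ∧ _ from ⟨hne, h⟩)
        have hic : u.val / 2 < c := by omega
        refine ⟨⟨u.val / 2, hic⟩, ?_⟩
        rw [hf]
        simp only
        rw [Sym2.eq_iff]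
        rcases Nat.mod_two_eq_zero_or_one u.val with hpar | hpar
        · left
          constructor <;> exact Fin.ext (by simp only; omega)
        · right
          constructor <;> exact Fin.ext (by simp only; omega)
      · rintro ⟨i, he⟩
        have hi := i.isLt
        rw [hf] at he
        simp only [Sym2.eq_iff] at he
        rw [compl_adj]
        rcases he with ⟨h1, h2⟩ | ⟨h1, h2⟩ <;>
        · have hu := congrArg Fin.val h1
          have hv := congrArg Fin.val h2
          simp only at hu hv
          refine ⟨fun h => ?_, fun hadj => (show u ≠ v ∧ _ from hadj).2 ⟨?_, ?_⟩⟩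
          · have := congrArg Fin.val h; omega
          · omega
          · omega
  have hinj : Function.Injective f := by
    intro i j hij
    rw [hf] at hij
    simp only [Sym2.eq_iff, Fin.mk.injEq] at hij
    rcases hij with ⟨h1, _⟩ | ⟨h1, _⟩ <;> exact Fin.ext (by omega)
  rw [hrange, ← Set.image_univ, Set.ncard_image_of_injective _ hinj, Set.ncard_univ,
    Nat.card_eq_fintype_card, Fintype.card_fin]

lemma mg_ncard (m c : ℕ) (h2c : 2 * c ≤ m) :
    (mg m c).edgeSet.ncard = m.choose 2 - c := by
  have h := edge_ncard_add_compl (mg m c)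
  rw [mg_compl_ncard m c h2c] at h
  omega

theorem stmt_11 (n k r q : ℕ) (hk : 6 ≤ k) (hkn : k ≤ n)
    (hn : (n : ℝ) ≤ 5 * (k : ℝ) / 4 - 1)
    (hr : (k - 1) / 2 + 2 ≤ r)
    (hd : n - 1 = (k - 2) + q) (hq : q ≤ k - 3) :
    2 * (n - k + 2) + exK (k - 2) r ≤ exK (k - 1) r + exK (q + 1) r := by
  have hn' : 4 * n + 4 ≤ 5 * k := by
    have : (4 : ℝ) * n + 4 ≤ 5 * k := by linarith
    exact_mod_cast this
  have hq4 : 4 * q ≤ k := by omega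
  have hr' : k + 2 ≤ 2 * r := by omega
  have hrge : 2 ≤ r := by omega
  have hU : exK (k - 2) r + ((k - 2) - (r - 1)) ≤ (k - 2).choose 2 := by
    have hlow : k - 2 ≤ (k - 2).choose 2 := by
      rw [Nat.choose_two_right]
      have h1 : (k - 2) * 2 / 2 ≤ (k - 2) * (k - 2 - 1) / 2 :=
        Nat.div_le_div_right (Nat.mul_le_mul_left _ (by omega))
      omega
    have h := exK_le_s11 (n := k - 2) (b := (k - 2).choose 2 - ((k - 2) - (r - 1))) hrge ?_
    · omega
    · intro G hG
      have := turan_upper (by omega) G hG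
      omega
  have hL1 : (k - 1).choose 2 - (k - r) ≤ exK (k - 1) r := by
    have h2c : 2 * (k - r) ≤ k - 1 := by omega
    have hclique : (mg (k - 1) (k - r)).CliqueFree r := mg_cliqueFree _ _ _ h2c (by omega)
    have := exK_ge _ hclique
    rwa [mg_ncard _ _ h2c] at this
  have hL2 : (q + 1).choose 2 ≤ exK (q + 1) r := by
    have h2c : 2 * 0 ≤ q + 1 := by omega
    have hclique : (mg (q + 1) 0).CliqueFree r := mg_cliqueFree _ _ _ h2c (by omega)
    have := exK_ge _ hclique
    rw [mg_ncard _ _ h2c] at this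
    omega
  have hch1 : (k - 1).choose 2 = (k - 2).choose 2 + (k - 2) := by
    have hk1 : k - 1 = (k - 2) + 1 := by omega
    rw [hk1, Nat.choose_succ_succ, Nat.choose_one_right]
    have h2 : Nat.succ 1 = 2 := rfl
    rw [h2]
    omega
  by_cases hq1 : q = 1
  · subst hq1
    have h22 : (1 + 1).choose 2 = 1 := rfl
    omega
  · have hq2 : 2 ≤ q := by omega
    have hch2 : q + 1 ≤ (q + 1).choose 2 := by
      rw [Nat.choose_two_right]
      have h1 : (q + 1) * 2 / 2 ≤ (q + 1) * (q + 1 - 1) / 2 :=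
        Nat.div_le_div_right (Nat.mul_le_mul_left _ (by omega))
      omega
    omega
end
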